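/- Let E be a finite-dimensional real inner product space, n ≥ 2, and U₁, …, Uₙ linear subspaces of E with 𝒰 := U₁ × ⋯ × Uₙ ⊆ Eⁿ. Let B be a real n × n lower-triangular matrix with positive diagonal entries and let Z be a real n × (n−1) matrix satisfying B + Bᵀ = 2 Z Zᵀ. With ℳ_B := P_𝒰 ∘ B̂ ∘ P_𝒰 + P_{𝒰⊥} (which is invertible), define 𝒞 := (Ẑ)* ∘ ℳ_B⁻¹ ∘ P_𝒰 ∘ Ẑ : E^{n−1} → E^{n−1} and 𝒯 := id − 𝒞. Then 𝒯 is iso-averaged, i.e. 2 • (𝒯* ∘ 𝒯) = 𝒯 + 𝒯* (equivalently, 2 • (𝒞* ∘ 𝒞) = 𝒞 + 𝒞*). -/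

import Mathlib

noncomputable section

variable {E : Type*} [NormedAddCommGroup E] [InnerProductSpace ℝ E] [FiniteDimensional ℝ E]

def prodSubspace {n : ℕ} (U : Fin n → Submodule ℝ E) :
    Submodule ℝ (PiLp 2 fun _ : Fin n => E) where
  carrier := {v | ∀ i, v i ∈ U i}
  add_mem' hv hw i := (U i).add_mem (hv i) (hw i)
  zero_mem' i := (U i).zero_mem
  smul_mem' c v hv i := (U i).smul_mem c (hv i)

instance {n : ℕ} : FiniteDimensional ℝ (PiLp 2 fun _ : Fin n => E) :=
  LinearEquiv.finiteDimensional (WithLp.linearEquiv 2 ℝ (∀ _ : Fin n, E)).symm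

/-- Blockwise action of a rectangular real matrix on products of `E`:
`(K̂ v)ᵢ = Σⱼ Kᵢⱼ • vⱼ`. -/
def matHat {m n : ℕ} (K : Matrix (Fin m) (Fin n) ℝ) :
    (PiLp 2 fun _ : Fin n => E) →ₗ[ℝ] (PiLp 2 fun _ : Fin m => E) where
  toFun v := WithLp.toLp 2 (fun i => ∑ j, K i j • v j)
  map_add' v w := by
    ext i
    simp [Finset.sum_add_distrib, smul_add]
  map_smul' c v := by
    ext i
    simp [Finset.smul_sum, smul_comm c]

/-- The orthogonal projection onto `𝒰`, as an endomorphism. -/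
def projProd {n : ℕ} (U : Fin n → Submodule ℝ E) :
    (PiLp 2 fun _ : Fin n => E) →ₗ[ℝ] (PiLp 2 fun _ : Fin n => E) :=
  (prodSubspace U).subtype ∘ₗ (Submodule.orthogonalProjectionOnto (prodSubspace U)).toLinearMap

/-- The orthogonal projection onto `𝒰ᗮ`, as an endomorphism. -/
def projProdPerp {n : ℕ} (U : Fin n → Submodule ℝ E) :
    (PiLp 2 fun _ : Fin n => E) →ₗ[ℝ] (PiLp 2 fun _ : Fin n => E) :=
  (prodSubspace U)ᗮ.subtype ∘ₗ (Submodule.orthogonalProjectionOnto (prodSubspace U)ᗮ).toLinearMap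

/-- The operator `ℳ_B := P_𝒰 ∘ B̂ ∘ P_𝒰 + P_{𝒰ᗮ}`. -/
def MopB {n : ℕ} (B : Matrix (Fin n) (Fin n) ℝ) (U : Fin n → Submodule ℝ E) :
    (PiLp 2 fun _ : Fin n => E) →ₗ[ℝ] (PiLp 2 fun _ : Fin n => E) :=
  projProd U ∘ₗ matHat B ∘ₗ projProd U + projProdPerp U


-- auxiliary lemmas

lemma matHat_apply {m n : ℕ} (K : Matrix (Fin m) (Fin n) ℝ)
    (v : PiLp 2 fun _ : Fin n => E) (i : Fin m) :
    matHat (E := E) K v i = ∑ j, K i j • v j := rfl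

lemma matHat_mul {m n p : ℕ} (K : Matrix (Fin m) (Fin n) ℝ) (L : Matrix (Fin n) (Fin p) ℝ) :
    matHat (E := E) (K * L) = matHat K ∘ₗ matHat L := by
  apply LinearMap.ext; intro v; ext i
  simp only [matHat_apply, LinearMap.comp_apply, Matrix.mul_apply, Finset.sum_smul,
    Finset.smul_sum, smul_smul]
  rw [Finset.sum_comm]

lemma matHat_smul {m n : ℕ} (c : ℝ) (K : Matrix (Fin m) (Fin n) ℝ) :
    matHat (E := E) (c • K) = c • matHat K := by
  apply LinearMap.ext; intro v; ext i
  simp [matHat_apply, Finset.smul_sum, smul_smul]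

lemma matHat_add {m n : ℕ} (K L : Matrix (Fin m) (Fin n) ℝ) :
    matHat (E := E) (K + L) = matHat K + matHat L := by
  apply LinearMap.ext; intro v; ext i
  simp [matHat_apply, add_smul, Finset.sum_add_distrib]

lemma adjoint_matHat {m n : ℕ} (K : Matrix (Fin m) (Fin n) ℝ) :
    LinearMap.adjoint (matHat (E := E) K) = matHat K.transpose := by
  symm
  rw [LinearMap.eq_adjoint_iff]
  intro x y
  simp only [PiLp.inner_apply, matHat_apply, sum_inner, inner_sum, real_inner_smul_left,
    real_inner_smul_right, Matrix.transpose_apply]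
  rw [Finset.sum_comm]

lemma projProd_mem {n : ℕ} (U : Fin n → Submodule ℝ E) (x : PiLp 2 fun _ : Fin n => E) :
    projProd U x ∈ prodSubspace U := (Submodule.orthogonalProjectionOnto (prodSubspace U) x).2

lemma projProd_eq_self {n : ℕ} (U : Fin n → Submodule ℝ E) {x : PiLp 2 fun _ : Fin n => E}
    (hx : x ∈ prodSubspace U) : projProd U x = x := by
  have h : (Submodule.orthogonalProjectionOnto (prodSubspace U)) x = ⟨x, hx⟩ := by
    exact Submodule.orthogonalProjectionOnto_mem_subspace_eq_self (K := prodSubspace U) ⟨x, hx⟩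
  show ((Submodule.orthogonalProjectionOnto (prodSubspace U)) x : PiLp 2 fun _ : Fin n => E) = x
  rw [h]

lemma projPerp_eq_self {n : ℕ} (U : Fin n → Submodule ℝ E) {x : PiLp 2 fun _ : Fin n => E}
    (hx : x ∈ (prodSubspace U)ᗮ) : projProdPerp U x = x := by
  have h : (Submodule.orthogonalProjectionOnto (prodSubspace U)ᗮ) x = ⟨x, hx⟩ := by
    exact Submodule.orthogonalProjectionOnto_mem_subspace_eq_self (K := (prodSubspace U)ᗮ) ⟨x, hx⟩
  show ((Submodule.orthogonalProjectionOnto (prodSubspace U)ᗮ) x : PiLp 2 fun _ : Fin n => E) = x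
  rw [h]

lemma adjoint_projProd {n : ℕ} (U : Fin n → Submodule ℝ E) :
    LinearMap.adjoint (projProd U) = projProd U := by
  symm
  rw [LinearMap.eq_adjoint_iff]
  intro x y
  exact Submodule.inner_starProjection_left_eq_right _ x y

lemma projProd_add_perp {n : ℕ} (U : Fin n → Submodule ℝ E) :
    projProd U + projProdPerp U = LinearMap.id := by
  apply LinearMap.ext; intro x
  simpa [projProd, projProdPerp] using
    Submodule.starProjection_add_starProjection_orthogonal (prodSubspace U) x

lemma projProd_comp_perp {n : ℕ} (U : Fin n → Submodule ℝ E) :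
    projProd U ∘ₗ projProdPerp U = 0 := by
  apply LinearMap.ext; intro x
  have h : (projProdPerp U x : PiLp 2 fun _ : Fin n => E) ∈ (prodSubspace U)ᗮ :=
    (Submodule.orthogonalProjectionOnto (prodSubspace U)ᗮ x).2
  show projProd U (projProdPerp U x) = 0
  show ((Submodule.orthogonalProjectionOnto (prodSubspace U)) (projProdPerp U x)
      : PiLp 2 fun _ : Fin n => E) = 0
  rw [Submodule.orthogonalProjectionOnto_apply_of_mem_orthogonal h]
  rfl

lemma perp_comp_projProd {n : ℕ} (U : Fin n → Submodule ℝ E) :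
    projProdPerp U ∘ₗ projProd U = 0 := by
  apply LinearMap.ext; intro x
  have h : (projProd U x : PiLp 2 fun _ : Fin n => E) ∈ ((prodSubspace U)ᗮ)ᗮ :=
    Submodule.le_orthogonal_orthogonal _ (projProd_mem U x)
  show projProdPerp U (projProd U x) = 0
  show ((Submodule.orthogonalProjectionOnto (prodSubspace U)ᗮ) (projProd U x)
      : PiLp 2 fun _ : Fin n => E) = 0
  rw [Submodule.orthogonalProjectionOnto_apply_of_mem_orthogonal h]
  rfl

lemma projProd_comp_self {n : ℕ} (U : Fin n → Submodule ℝ E) :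
    projProd U ∘ₗ projProd U = projProd U := by
  apply LinearMap.ext; intro x
  exact projProd_eq_self U (projProd_mem U x)

lemma projPerp_comp_self {n : ℕ} (U : Fin n → Submodule ℝ E) :
    projProdPerp U ∘ₗ projProdPerp U = projProdPerp U := by
  apply LinearMap.ext; intro x
  exact projPerp_eq_self U ((Submodule.orthogonalProjectionOnto (prodSubspace U)ᗮ x).2)

lemma adjoint_projProdPerp {n : ℕ} (U : Fin n → Submodule ℝ E) :
    LinearMap.adjoint (projProdPerp U) = projProdPerp U := by
  symm
  rw [LinearMap.eq_adjoint_iff]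
  intro x y
  exact Submodule.inner_starProjection_left_eq_right _ x y

lemma MopB_isUnit {n : ℕ} (U : Fin n → Submodule ℝ E)
    (B : Matrix (Fin n) (Fin n) ℝ) (hlow : ∀ i j : Fin n, i < j → B i j = 0)
    (hdiag : ∀ i : Fin n, 0 < B i i)
    (Z : Matrix (Fin n) (Fin (n - 1)) ℝ)
    (hZ : B + B.transpose = (2 : ℝ) • (Z * Z.transpose)) :
    IsUnit (MopB (E := E) B U) := by
  rw [LinearMap.isUnit_iff_ker_eq_bot, LinearMap.ker_eq_bot']
  intro v hv
  have hv' : projProd U (matHat B (projProd U v)) + projProdPerp U v = 0 := by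
    simpa [MopB, LinearMap.add_apply, LinearMap.comp_apply] using hv
  -- split the two orthogonal pieces
  have ha : projProd U (matHat B (projProd U v)) ∈ prodSubspace U := projProd_mem U _
  have hb : projProdPerp U v ∈ (prodSubspace U)ᗮ :=
    (Submodule.orthogonalProjectionOnto (prodSubspace U)ᗮ v).2
  have ha' : projProd U (matHat B (projProd U v)) ∈ (prodSubspace U)ᗮ := by
    have : projProd U (matHat B (projProd U v)) = -(projProdPerp U v) := by
      linear_combination (norm := abel) hv'
    rw [this]; exact neg_mem hb
  have hPzero : projProd U (matHat B (projProd U v)) = 0 :=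
    Submodule.disjoint_def.1 (Submodule.orthogonal_disjoint (prodSubspace U)) _ ha ha'
  have hQzero : projProdPerp U v = 0 := by
    linear_combination (norm := abel) hv' - hPzero
  have hvK : v ∈ prodSubspace U := by
    have h1 : projProd U v + projProdPerp U v = v :=
      congrFun (congrArg DFunLike.coe (projProd_add_perp U)) v
    rw [hQzero, add_zero] at h1
    rw [← h1]; exact projProd_mem U v
  have hPv : projProd U v = v := projProd_eq_self U hvK
  rw [hPv] at hPzero
  -- inner products with elements of 𝒰 vanish
  have hinner : ∀ u ∈ prodSubspace U, (inner ℝ (matHat B v) u : ℝ) = 0 := by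
    intro u hu
    calc (inner ℝ (matHat B v) u : ℝ)
        = inner ℝ (matHat B v) (projProd U u) := by rw [projProd_eq_self U hu]
      _ = inner ℝ (projProd U (matHat B v)) u :=
          (Submodule.inner_starProjection_left_eq_right _ _ _).symm
      _ = 0 := by rw [hPzero]; exact inner_zero_left u
  have h1 : (inner ℝ (matHat (E := E) B v) v : ℝ) = 0 := hinner v hvK
  have h2 : (inner ℝ (matHat (E := E) B.transpose v) v : ℝ) = 0 := by
    rw [show matHat (E := E) B.transpose = LinearMap.adjoint (matHat (E := E) B) from
      (adjoint_matHat B).symm, LinearMap.adjoint_inner_left, real_inner_comm]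
    exact h1
  -- deduce Ẑᵀ v = 0
  have hZv : LinearMap.adjoint (matHat (E := E) Z) v = 0 := by
    have hsum : (inner ℝ (matHat (E := E) (B + B.transpose) v) v : ℝ) = 0 := by
      rw [matHat_add]
      simp only [LinearMap.add_apply, inner_add_left, h1, h2, add_zero]
    rw [hZ, matHat_smul, matHat_mul,
      show matHat (E := E) Z.transpose = LinearMap.adjoint (matHat (E := E) Z) from
        (adjoint_matHat Z).symm] at hsum
    simp only [LinearMap.smul_apply, LinearMap.comp_apply, real_inner_smul_left] at hsum
    have h3 : (inner ℝ (matHat (E := E) Z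
        (LinearMap.adjoint (matHat (E := E) Z) v)) v : ℝ) = 0 := by linarith
    rw [← LinearMap.adjoint_inner_right] at h3
    exact inner_self_eq_zero.1 h3
  have hBBT : matHat (E := E) (B + B.transpose) v = 0 := by
    rw [hZ, matHat_smul, matHat_mul,
      show matHat (E := E) Z.transpose = LinearMap.adjoint (matHat (E := E) Z) from
        (adjoint_matHat Z).symm]
    simp [hZv]
  have hT : ∀ u ∈ prodSubspace U, (inner ℝ (matHat (E := E) B.transpose v) u : ℝ) = 0 := by
    intro u hu
    have hsplit : matHat (E := E) B.transpose v = matHat (B + B.transpose) v - matHat B v := by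
      rw [matHat_add]; simp
    rw [hsplit, hBBT, zero_sub, inner_neg_left, hinner u hu, neg_zero]
  -- reverse induction to show v = 0
  have key : ∀ i : Fin n, (∀ j : Fin n, i < j → v j = 0) → v i = 0 := by
    intro i ih
    have hu : (WithLp.toLp 2 (Pi.single i (v i)) : PiLp 2 fun _ : Fin n => E) ∈ prodSubspace U := by
      intro j
      rcases eq_or_ne j i with rfl | hne
      · simpa using hvK j
      · rw [WithLp.ofLp_toLp, Pi.single_eq_of_ne hne]; exact (U j).zero_mem
    have h0 := hT _ hu
    rw [PiLp.inner_apply] at h0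
    simp only [WithLp.ofLp_toLp] at h0
    have h0' : (inner ℝ (matHat (E := E) B.transpose v i) (v i) : ℝ) = 0 := by
      rw [Finset.sum_eq_single i (fun j _ hj => by
        rw [Pi.single_eq_of_ne hj]; exact inner_zero_right _)
        (fun h => absurd (Finset.mem_univ i) h)] at h0
      rwa [Pi.single_eq_same] at h0
    rw [matHat_apply, sum_inner] at h0'
    have h0'' : B i i * (inner ℝ (v i) (v i) : ℝ) = 0 := by
      rw [Finset.sum_eq_single i (fun j _ hj => ?_)
        (fun h => absurd (Finset.mem_univ i) h)] at h0'
      · rwa [Matrix.transpose_apply, real_inner_smul_left] at h0'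
      · rcases lt_trichotomy j i with hji | rfl | hij
        · rw [Matrix.transpose_apply, hlow j i hji, zero_smul]
          exact inner_zero_left _
        · exact absurd rfl hj
        · rw [ih j hij, smul_zero]
          exact inner_zero_left _
    have := (hdiag i).ne'
    have hvi : (inner ℝ (v i) (v i) : ℝ) = 0 := by
      rcases mul_eq_zero.1 h0'' with h | h
      · exact absurd h this
      · exact h
    exact inner_self_eq_zero.1 hvi
  have hzero : ∀ i : Fin n, v i = 0 := fun i =>
    (wellFounded_gt (α := Fin n)).induction (C := fun i => v i = 0) i
      fun i ih => key i fun j hj => ih j hj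
  exact PiLp.ext hzero


lemma isoAveraged_abstract {V W : Type*} [NormedAddCommGroup V] [InnerProductSpace ℝ V]
    [FiniteDimensional ℝ V] [NormedAddCommGroup W] [InnerProductSpace ℝ W]
    [FiniteDimensional ℝ W]
    (P Q M H : Module.End ℝ V) (Zh : W →ₗ[ℝ] V)
    (hM : IsUnit M) (hMform : M = P ∘ₗ H ∘ₗ P + Q)
    (hPQc : P ∘ₗ Q = 0) (hQPc : Q ∘ₗ P = 0) (hQQc : Q ∘ₗ Q = Q)
    (hPQ1c : P + Q = LinearMap.id)
    (hP' : LinearMap.adjoint P = P) (hQ' : LinearMap.adjoint Q = Q)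
    (hHsum : H + LinearMap.adjoint H = (2 : ℝ) • (Zh ∘ₗ LinearMap.adjoint Zh)) :
    (2 : ℝ) • (LinearMap.adjoint
          (LinearMap.id - LinearMap.adjoint Zh ∘ₗ Ring.inverse M ∘ₗ P ∘ₗ Zh) ∘ₗ
        (LinearMap.id - LinearMap.adjoint Zh ∘ₗ Ring.inverse M ∘ₗ P ∘ₗ Zh)) =
      (LinearMap.id - LinearMap.adjoint Zh ∘ₗ Ring.inverse M ∘ₗ P ∘ₗ Zh) +
        LinearMap.adjoint
          (LinearMap.id - LinearMap.adjoint Zh ∘ₗ Ring.inverse M ∘ₗ P ∘ₗ Zh) := by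
  have hPQ : P * Q = 0 := hPQc
  have hQP : Q * P = 0 := hQPc
  have hQQ : Q * Q = Q := hQQc
  have hPQ1 : P + Q = 1 := hPQ1c.trans Module.End.one_eq_id.symm
  set N := Ring.inverse M with hNdef
  set N' := LinearMap.adjoint N with hN'def
  set M' := LinearMap.adjoint M with hM'def
  set Zs := LinearMap.adjoint Zh with hZsdef
  have hNM : N * M = 1 := Ring.inverse_mul_cancel M hM
  have hMN : M * N = 1 := Ring.mul_inverse_cancel M hM
  have hadj_id : LinearMap.adjoint (LinearMap.id : Module.End ℝ V) = LinearMap.id := by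
    symm; rw [LinearMap.eq_adjoint_iff]; exact fun x y => rfl
  have hadj_idW : LinearMap.adjoint (LinearMap.id : Module.End ℝ W) = LinearMap.id := by
    symm; rw [LinearMap.eq_adjoint_iff]; exact fun x y => rfl
  have hadj_one : LinearMap.adjoint (1 : Module.End ℝ V) = 1 := by
    rw [Module.End.one_eq_id, hadj_id]
  have hN'M' : N' * M' = 1 := by
    have h := congrArg LinearMap.adjoint hMN
    rw [Module.End.mul_eq_comp, LinearMap.adjoint_comp, hadj_one, ← hN'def, ← hM'def,
      ← Module.End.mul_eq_comp] at h
    exact h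
  have hM'N' : M' * N' = 1 := by
    have h := congrArg LinearMap.adjoint hNM
    rw [Module.End.mul_eq_comp, LinearMap.adjoint_comp, hadj_one, ← hN'def, ← hM'def,
      ← Module.End.mul_eq_comp] at h
    exact h
  have hMform' : M = P * (H * P) + Q := by
    rw [hMform]; rfl
  have hMQ : M * Q = Q := by
    rw [hMform', add_mul, mul_assoc, mul_assoc, hPQ, mul_zero, mul_zero, zero_add, hQQ]
  have hQM : Q * M = Q := by
    rw [hMform', mul_add, ← mul_assoc, hQP, zero_mul, zero_add, hQQ]
  have hNQ : N * Q = Q := by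
    have h : N * (M * Q) = N * Q := by rw [hMQ]
    rw [← mul_assoc, hNM, one_mul] at h
    exact h.symm
  have hQN : Q * N = Q := by
    have h : (Q * M) * N = Q * N := by rw [hQM]
    rw [mul_assoc, hMN, mul_one] at h
    exact h.symm
  have hQM' : Q * M' = Q := by
    have h := congrArg LinearMap.adjoint hMQ
    rw [Module.End.mul_eq_comp, LinearMap.adjoint_comp, hQ', ← hM'def,
      ← Module.End.mul_eq_comp] at h
    exact h
  have hM'Q : M' * Q = Q := by
    have h := congrArg LinearMap.adjoint hQM
    rw [Module.End.mul_eq_comp, LinearMap.adjoint_comp, hQ', ← hM'def,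
      ← Module.End.mul_eq_comp] at h
    exact h
  have hN'Q : N' * Q = Q := by
    have h : N' * (M' * Q) = N' * Q := by rw [hM'Q]
    rw [← mul_assoc, hN'M', one_mul] at h
    exact h.symm
  have hQN' : Q * N' = Q := by
    have h : (Q * M') * N' = Q * N' := by rw [hQM']
    rw [mul_assoc, hM'N', mul_one] at h
    exact h.symm
  have hM'form : M' = P * (LinearMap.adjoint H * P) + Q := by
    rw [hM'def, hMform', map_add, Module.End.mul_eq_comp, Module.End.mul_eq_comp,
      LinearMap.adjoint_comp, LinearMap.adjoint_comp, hP', hQ']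
    simp only [Module.End.mul_eq_comp, LinearMap.comp_assoc]
  set ZZe : Module.End ℝ V := Zh ∘ₗ Zs with hZZedef
  have hMM' : M + M' = (2 : ℝ) • (P * (ZZe * P)) + (2 : ℝ) • Q := by
    rw [hMform', hM'form]
    have h : P * (H * P) + Q + (P * (LinearMap.adjoint H * P) + Q)
        = P * ((H + LinearMap.adjoint H) * P) + ((2 : ℝ) • Q) := by
      rw [add_mul, mul_add, show ((2 : ℝ) • Q : Module.End ℝ V) = Q + Q from two_smul ℝ Q]
      abel
    rw [h, hHsum, show ((2 : ℝ) • (Zh ∘ₗ Zs) : Module.End ℝ V) = (2 : ℝ) • ZZe from rfl,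
      smul_mul_assoc, mul_smul_comm]
  have e1 : N' * (M + M') * N = N + N' := by
    rw [mul_add, add_mul, mul_assoc N' M N, hMN, mul_one, hN'M', one_mul]
    try abel
  have key : N + N' = (2 : ℝ) • ((N' * P) * (ZZe * (P * N))) + (2 : ℝ) • Q := by
    have e2 : N' * (M + M') * N
        = (2 : ℝ) • ((N' * P) * (ZZe * (P * N))) + (2 : ℝ) • Q := by
      rw [hMM', mul_add, add_mul, mul_smul_comm, smul_mul_assoc, mul_smul_comm,
        smul_mul_assoc, mul_assoc N' Q N, hQN, hN'Q]
      congr 2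
      try noncomm_ring
    rw [← e1, e2]
  have hPeq : P = 1 - Q := by rw [← hPQ1]; abel
  have hN'P : N' * P = N' - Q := by rw [hPeq, mul_sub, mul_one, hN'Q]
  have hPN : P * N = N - Q := by rw [hPeq, sub_mul, one_mul, hQN]
  have hNP : N * P = N - Q := by rw [hPeq, mul_sub, mul_one, hNQ]
  have hPN' : P * N' = N' - Q := by rw [hPeq, sub_mul, one_mul, hQN']
  have key2 : (N * P) + (P * N') = (2 : ℝ) • ((P * N') * (ZZe * (N * P))) := by
    have h2 : (2 : ℝ) • ((P * N') * (ZZe * (N * P)))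
        = (2 : ℝ) • ((N' * P) * (ZZe * (P * N))) := by
      rw [hPN', hN'P, hNP, hPN]
    rw [h2, hNP, hPN']
    have h3 := key
    rw [show ((2 : ℝ) • Q : Module.End ℝ V) = Q + Q from two_smul ℝ Q] at h3
    linear_combination (norm := abel) h3
  set C := Zs ∘ₗ N ∘ₗ P ∘ₗ Zh with hCdef
  set C' := Zs ∘ₗ P ∘ₗ N' ∘ₗ Zh with hC'def
  have hadjC : LinearMap.adjoint C = C' := by
    rw [hCdef, hC'def, LinearMap.adjoint_comp, LinearMap.adjoint_comp, LinearMap.adjoint_comp,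
      hZsdef, LinearMap.adjoint_adjoint, hP', ← hN'def]
    simp only [LinearMap.comp_assoc]
  have hCs : C = Zs ∘ₗ (N * P) ∘ₗ Zh := by
    rw [hCdef, Module.End.mul_eq_comp]
    simp only [LinearMap.comp_assoc]
  have hC's : C' = Zs ∘ₗ (P * N') ∘ₗ Zh := by
    rw [hC'def, Module.End.mul_eq_comp]
    simp only [LinearMap.comp_assoc]
  have hCC : C' ∘ₗ C = Zs ∘ₗ ((P * N') * (ZZe * (N * P))) ∘ₗ Zh := by
    rw [hCdef, hC'def, hZZedef]
    simp only [Module.End.mul_eq_comp, LinearMap.comp_assoc]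
  have hmain : C + C' = (2 : ℝ) • (C' ∘ₗ C) := by
    rw [hCC, hCs, hC's, ← LinearMap.comp_smul, ← LinearMap.smul_comp, ← key2,
      LinearMap.add_comp, LinearMap.comp_add]
  show (2 : ℝ) • (LinearMap.adjoint (LinearMap.id - C) ∘ₗ (LinearMap.id - C))
      = (LinearMap.id - C) + LinearMap.adjoint (LinearMap.id - C)
  rw [map_sub, hadj_idW, hadjC]
  have hmain' : (2 : ℝ) • (C' * C) = C + C' := by
    rw [Module.End.mul_eq_comp, ← hmain]
  simp only [← Module.End.mul_eq_comp, ← Module.End.one_eq_id]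
  have expand : ((1 : Module.End ℝ W) - C') * (1 - C) = 1 - C - C' + C' * C := by
    noncomm_ring
  rw [expand, smul_add, smul_sub, smul_sub, hmain']
  simp only [two_smul]
  abel

/-- Suppose `B` is lower triangular with positive diagonal and
`Z` is an `n × (n-1)` real matrix with `B + Bᵀ = 2 Z Zᵀ`. With `ℳ_B` invertible, the
operator `𝒯 := id - (Ẑ)* ∘ ℳ_B⁻¹ ∘ P_𝒰 ∘ Ẑ` on `E^{n-1}` is iso-averaged:
`2 • (𝒯* ∘ 𝒯) = 𝒯 + 𝒯*`. (Here `ℳ_B⁻¹` is realized as `Ring.inverse ℳ_B` in the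
endomorphism ring, which equals the genuine inverse since `ℳ_B` is invertible.) -/
theorem graphOperator_isoAveraged {n : ℕ} (hn : 2 ≤ n) (U : Fin n → Submodule ℝ E)
    (B : Matrix (Fin n) (Fin n) ℝ) (hlow : ∀ i j : Fin n, i < j → B i j = 0)
    (hdiag : ∀ i : Fin n, 0 < B i i)
    (Z : Matrix (Fin n) (Fin (n - 1)) ℝ)
    (hZ : B + B.transpose = (2 : ℝ) • (Z * Z.transpose)) :
    (2 : ℝ) • (LinearMap.adjoint
          (LinearMap.id -
            LinearMap.adjoint (matHat (E := E) Z) ∘ₗ Ring.inverse (MopB (E := E) B U) ∘ₗ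
              projProd U ∘ₗ matHat (E := E) Z) ∘ₗ
        (LinearMap.id -
          LinearMap.adjoint (matHat (E := E) Z) ∘ₗ Ring.inverse (MopB (E := E) B U) ∘ₗ
            projProd U ∘ₗ matHat (E := E) Z)) =
      (LinearMap.id -
          LinearMap.adjoint (matHat (E := E) Z) ∘ₗ Ring.inverse (MopB (E := E) B U) ∘ₗ
            projProd U ∘ₗ matHat (E := E) Z) +
        LinearMap.adjoint
          (LinearMap.id -
            LinearMap.adjoint (matHat (E := E) Z) ∘ₗ Ring.inverse (MopB (E := E) B U) ∘ₗ
              projProd U ∘ₗ matHat (E := E) Z) := by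
  have hHsum : matHat (E := E) B + LinearMap.adjoint (matHat (E := E) B)
      = (2 : ℝ) • (matHat (E := E) Z ∘ₗ LinearMap.adjoint (matHat (E := E) Z)) := by
    rw [adjoint_matHat, adjoint_matHat, ← matHat_add, hZ, matHat_smul, matHat_mul]
  exact isoAveraged_abstract (projProd U) (projProdPerp U) (MopB (E := E) B U)
    (matHat (E := E) B) (matHat (E := E) Z)
    (MopB_isUnit U B hlow hdiag Z hZ) rfl
    (projProd_comp_perp U) (perp_comp_projProd U) (projPerp_comp_self U)
    (projProd_add_perp U) (adjoint_projProd U) (adjoint_projProdPerp U) hHsum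

end
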